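/- Let φ = C₁ ∧ … ∧ C_n be a CNF formula over variables x₁,…,x_m. Over Σ = {r, t₁,f₁,…,t_m,f_m, c₁,…,c_n}, let S be the DIMS with root label r and rules: r → (t₁|f₁) || … || (t_m|f_m); t_j → c_{j₁} || … || c_{j_k} where c_{j₁},…,c_{j_k} are the symbols of the clauses using the literal x_j; f_j → c_{j₁} || … || c_{j_k} where c_{j₁},…,c_{j_k} are the symbols of the clauses using ¬x_j; and c_i → ε, and let q be the twig query r[//c₁]…[//c_n], i.e., the query whose root is labeled r and has n children via descendant edges, labeled c₁,…,c_n respectively. Then φ is satisfiable if and only if there exists a tree t with t ∈ L(S) and t ⊨ q. -/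
import Mathlib

set_option autoImplicit false

universe u v w

/-- An unordered word over an alphabet `σ`: a multiset over `σ`,
viewed as a function giving the number of occurrences of each symbol. -/
def UWord (σ : Type u) : Type u := σ → ℕ

/-- The empty unordered word `ε`. -/
def UWord.zero {σ : Type u} : UWord σ := fun _ => 0

/-- Unordered concatenation (multiset union) of two unordered words. -/
def UWord.add {σ : Type u} (w₁ w₂ : UWord σ) : UWord σ := fun a => w₁ a + w₂ a

/-- The unordered word consisting of a single occurrence of `a`. -/
def UWord.single {σ : Type u} [DecidableEq σ] (a : σ) : UWord σ :=
  fun b => if b = a then 1 else 0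

/-- Unordered concatenation of a list of unordered words. -/
def listSum {σ : Type u} (l : List (UWord σ)) : UWord σ := l.foldr UWord.add UWord.zero

/-- An interval multiplicity `[lo,hi]` (with `hi ∈ ℕ ∪ {∞}`), where the flag
`opt` marks the variant `[lo,hi]?` that additionally allows zero iterations. -/
structure Iv : Type where
  lo : ℕ
  hi : ℕ∞
  opt : Bool

/-- Membership of a number of iterations in the set denoted by an interval multiplicity. -/
def Iv.Mem (I : Iv) (n : ℕ) : Prop :=
  (I.lo ≤ n ∧ (n : ℕ∞) ≤ I.hi) ∨ (I.opt = true ∧ n = 0)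

/-- The multiplicity `1 = [1,1]`. -/
def Iv.one : Iv := ⟨1, 1, false⟩
/-- The multiplicity `? = [0,1]`. -/
def Iv.qmark : Iv := ⟨0, 1, false⟩
/-- The multiplicity `+ = [1,∞]`. -/
def Iv.iplus : Iv := ⟨1, ⊤, false⟩
/-- The multiplicity `* = [0,∞]`. -/
def Iv.istar : Iv := ⟨0, ⊤, false⟩

/-- An atom `(a₁^{I₁} || ⋯ || a_k^{I_k})`: a list of symbols, each with a
multiplicity `1` (flag `true`) or `?` (flag `false`). -/
abbrev Atom (σ : Type u) : Type u := List (σ × Bool)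

/-- A clause `(A₁^{I₁} | ⋯ | A_k^{I_k})`: a list of atoms with interval multiplicities. -/
abbrev Clause (σ : Type u) : Type u := List (Atom σ × Iv)

/-- A disjunctive interval multiplicity expression `(D₁^{I₁} || ⋯ || D_k^{I_k})`
(as raw syntax; well-formedness is `DIME.WF`). -/
structure DIME (σ : Type u) : Type u where
  clauses : List (Clause σ × Iv)

/-- Language of a single symbol with its multiplicity (`1` or `?`) inside an atom. -/
def atomEntryLang {σ : Type u} [DecidableEq σ] (p : σ × Bool) : Set (UWord σ) :=
  if p.2 = true then {UWord.single p.1} else {UWord.single p.1, UWord.zero}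

/-- Unordered concatenation of the languages of the items of a list. -/
def listConcLang {σ : Type u} {α : Type v} (f : α → Set (UWord σ)) :
    List α → Set (UWord σ)
  | [] => {UWord.zero}
  | x :: xs => {w | ∃ w₁ ∈ f x, ∃ w₂ ∈ listConcLang f xs, w = w₁.add w₂}

/-- The language of an atom. -/
def Atom.lang {σ : Type u} [DecidableEq σ] (A : Atom σ) : Set (UWord σ) :=
  listConcLang atomEntryLang A

/-- The language `L(E^I)` obtained by iterating a language `L` according to
an interval multiplicity `I`. -/
def iterLang {σ : Type u} (L : Set (UWord σ)) (I : Iv) : Set (UWord σ) :=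
  {w | (∃ l : List (UWord σ),
          (∀ x ∈ l, x ∈ L) ∧ I.lo ≤ l.length ∧ (l.length : ℕ∞) ≤ I.hi ∧ w = listSum l) ∨
       (I.opt = true ∧ w = UWord.zero)}

/-- The language of a clause: disjunction of its atoms with intervals. -/
def Clause.lang {σ : Type u} [DecidableEq σ] (D : Clause σ) : Set (UWord σ) :=
  {w | ∃ p ∈ D, w ∈ iterLang (Atom.lang p.1) p.2}

/-- The language of a DIME: the unordered concatenation of its clauses with intervals. -/
def DIME.lang {σ : Type u} [DecidableEq σ] (E : DIME σ) : Set (UWord σ) :=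
  listConcLang (fun p => iterLang (Clause.lang p.1) p.2) E.clauses

/-- A clause is simple if all its atoms carry multiplicity `1` or `?`. -/
def Clause.Simple {σ : Type u} (D : Clause σ) : Prop :=
  ∀ p ∈ D, p.2 = Iv.one ∨ p.2 = Iv.qmark

/-- The list of all symbol occurrences in a DIME. -/
def DIME.symbols {σ : Type u} (E : DIME σ) : List σ :=
  E.clauses.flatMap fun p => p.1.flatMap fun q => q.1.map Prod.fst

/-- Well-formedness of a DIME `(D₁^{I₁} || ⋯ || D_k^{I_k})`: each `D_i` is either a
simple clause with `I_i ∈ {+,*}`, or a clause with `I_i ∈ {1,?}`; moreover no symbol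
occurs twice in the whole expression. -/
def DIME.WF {σ : Type u} (E : DIME σ) : Prop :=
  (∀ p ∈ E.clauses,
      (Clause.Simple p.1 ∧ (p.2 = Iv.iplus ∨ p.2 = Iv.istar)) ∨
      (p.2 = Iv.one ∨ p.2 = Iv.qmark)) ∧
  E.symbols.Nodup

/-- An unordered tree: a finite set of nodes, a root, a labeling with symbols of `σ`,
and an acyclic parent–child relation in which every non-root node has exactly one
parent. -/
structure UTree (σ : Type u) (ν : Type v) : Type (max u v) where
  nodes : Finset ν
  root : ν
  root_mem : root ∈ nodes
  lab : ν → σ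
  child : ν → ν → Prop
  child_mem : ∀ {m n : ν}, child m n → m ∈ nodes ∧ n ∈ nodes
  parent_unique : ∀ n ∈ nodes, n ≠ root → ∃! m : ν, child m n
  acyclic : ∀ n : ν, ¬ Relation.TransGen child n n

/-- The unordered word of (labels of) children of a node of a tree. -/
noncomputable def UTree.childWord {σ : Type u} {ν : Type v} (t : UTree σ ν) (n : ν) :
    UWord σ :=
  fun a => {m : ν | t.child n m ∧ t.lab m = a}.ncard

/-- A twig query: a tree with labels in `σ ∪ {⋆}` (`none` is the wildcard `⋆`) and two
disjoint edge relations, child edges and descendant edges. -/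
structure Twig (σ : Type u) (ν : Type v) : Type (max u v) where
  nodes : Finset ν
  root : ν
  root_mem : root ∈ nodes
  lab : ν → Option σ
  child : ν → ν → Prop
  desc : ν → ν → Prop
  child_mem : ∀ {m n : ν}, child m n → m ∈ nodes ∧ n ∈ nodes
  desc_mem : ∀ {m n : ν}, desc m n → m ∈ nodes ∧ n ∈ nodes
  edges_disjoint : ∀ m n : ν, ¬(child m n ∧ desc m n)
  parent_unique : ∀ n ∈ nodes, n ≠ root → ∃! m : ν, (child m n ∨ desc m n)
  acyclic : ∀ n : ν, ¬ Relation.TransGen (fun x y => child x y ∨ desc x y) n n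

/-- `q.Sat t`, written `t ⊨ q`: there exists an embedding of the twig query `q`
in the tree `t`. -/
def Twig.Sat {σ : Type u} {ν : Type v} {μ : Type w} (q : Twig σ ν) (t : UTree σ μ) :
    Prop :=
  ∃ f : ν → μ,
    f q.root = t.root ∧
    (∀ n ∈ q.nodes, f n ∈ t.nodes) ∧
    (∀ m n : ν, q.child m n → t.child (f m) (f n)) ∧
    (∀ m n : ν, q.desc m n → Relation.TransGen t.child (f m) (f n)) ∧
    (∀ n ∈ q.nodes, q.lab n = none ∨ q.lab n = some (t.lab (f n)))

/-- Embedding of a tree `s` in a tree `t` (viewing `s` as a twig query with only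
child edges and no wildcards). -/
def UTree.EmbedsIn {σ : Type u} {ν : Type v} {μ : Type w} (s : UTree σ ν)
    (t : UTree σ μ) : Prop :=
  ∃ f : ν → μ,
    f s.root = t.root ∧
    (∀ n ∈ s.nodes, f n ∈ t.nodes) ∧
    (∀ m n : ν, s.child m n → t.child (f m) (f n)) ∧
    (∀ n ∈ s.nodes, s.lab n = t.lab (f n))

/-- A rooted directed graph with vertex set `σ`. -/
structure RGraph (σ : Type u) : Type u where
  root : σ
  edge : σ → σ → Prop

/-- `symbols∃(L)`: the symbols present in at least one unordered word of `L`. -/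
def symbolsE {σ : Type u} (L : Set (UWord σ)) : Set σ := {a | ∃ w ∈ L, w a ≠ 0}

/-- `symbols∀(L)`: the symbols present in every unordered word of `L`. -/
def symbolsA {σ : Type u} (L : Set (UWord σ)) : Set σ := {a | ∀ w ∈ L, w a ≠ 0}

/-- A simulation of a rooted directed graph `G` in a tree `t`. -/
def RGraph.SimulatesIn {σ : Type u} {ν : Type v} (G : RGraph σ) (t : UTree σ ν) : Prop :=
  ∃ R : σ → ν → Prop,
    R G.root t.root ∧
    (∀ a : σ, ∀ n : ν, R a n → n ∈ t.nodes) ∧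
    (∀ a : σ, ∀ n : ν, R a n → ∀ b : σ, G.edge a b → ∃ n' : ν, t.child n n' ∧ R b n') ∧
    (∀ a : σ, ∀ n : ν, R a n → t.lab n = a)

/-- The graph `G` has no cycle reachable from its root. -/
def RGraph.NoReachCycle {σ : Type u} (G : RGraph σ) : Prop :=
  ∀ a : σ, Relation.ReflTransGen G.edge G.root a → ¬ Relation.TransGen G.edge a a

/-- A path of `G`: a nonempty sequence of vertices starting at the root such that
consecutive vertices are joined by an edge of `G`. -/
def RGraph.IsPath {σ : Type u} (G : RGraph σ) (l : List σ) : Prop :=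
  l ≠ [] ∧ l.head? = some G.root ∧ l.Chain' G.edge

/-- `t` is the unfolding `u_G` of the graph `G`: its nodes are the paths of `G`,
its root is the one-element path, nodes `p` and `p·a` are joined by a child edge,
and each node is labeled by its last vertex. -/
def RGraph.IsUnfolding {σ : Type u} (G : RGraph σ) (t : UTree σ (List σ)) : Prop :=
  (∀ l : List σ, l ∈ t.nodes ↔ G.IsPath l) ∧
  t.root = [G.root] ∧
  (∀ p q : List σ, t.child p q ↔ (G.IsPath p ∧ G.IsPath q ∧ ∃ a : σ, q = p ++ [a])) ∧
  (∀ p ∈ t.nodes, t.lab p = p.getLastD G.root)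

/-- Embedding of a twig query `q` in a rooted directed graph `G`. -/
def Twig.SatGraph {σ : Type u} {ν : Type v} (q : Twig σ ν) (G : RGraph σ) : Prop :=
  ∃ f : ν → σ,
    f q.root = G.root ∧
    (∀ m n : ν, q.child m n → G.edge (f m) (f n)) ∧
    (∀ m n : ν, q.desc m n → Relation.TransGen G.edge (f m) (f n)) ∧
    (∀ n ∈ q.nodes, q.lab n = none ∨ q.lab n = some (f n))

/-- Embedding of a tree `t` (viewed as a twig query with only child edges)
in a rooted directed graph `G`. -/
def UTree.SatGraph {σ : Type u} {ν : Type v} (t : UTree σ ν) (G : RGraph σ) : Prop :=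
  ∃ f : ν → σ,
    f t.root = G.root ∧
    (∀ m n : ν, t.child m n → G.edge (f m) (f n)) ∧
    (∀ n ∈ t.nodes, t.lab n = f n)

/-- A schema: a designated root label together with a map from symbols to DIMEs.
(For a DIMS the rules are well-formed DIMEs — `Schema.WF`; for an IMS they are
moreover disjunction-free — `Schema.DisjFree`.) -/
structure Schema (σ : Type u) : Type u where
  root : σ
  rules : σ → DIME σ

/-- All rules of the schema are well-formed DIMEs. -/
def Schema.WF {σ : Type u} (S : Schema σ) : Prop := ∀ a : σ, (S.rules a).WF

/-- The schema is disjunction-free (an IMS): every clause of every rule consists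
of a single atom. -/
def Schema.DisjFree {σ : Type u} (S : Schema σ) : Prop :=
  ∀ a : σ, ∀ p ∈ (S.rules a).clauses, p.1.length = 1

/-- `S.Mem t`, written `t ∈ L(S)`: the root of `t` carries the root label of `S` and,
for every node, the unordered word of labels of its children belongs to the language
of the rule for the node's label. -/
def Schema.Mem {σ : Type u} [DecidableEq σ] {ν : Type v} (S : Schema σ)
    (t : UTree σ ν) : Prop :=
  t.lab t.root = S.root ∧ ∀ n ∈ t.nodes, t.childWord n ∈ DIME.lang (S.rules (t.lab n))

/-- The existential dependency graph `G_S^∃` of a schema `S`. -/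
def Schema.existGraph {σ : Type u} [DecidableEq σ] (S : Schema σ) : RGraph σ :=
  ⟨S.root, fun a b => b ∈ symbolsE (DIME.lang (S.rules a))⟩

/-- The universal dependency graph `G_S^∀` of a schema `S`. -/
def Schema.univGraph {σ : Type u} [DecidableEq σ] (S : Schema σ) : RGraph σ :=
  ⟨S.root, fun a b => b ∈ symbolsA (DIME.lang (S.rules a))⟩

/- The alphabet `Σ = {r, t₁,f₁,…,t_m,f_m, c₁,…,c_n}` for a CNF formula
`φ = C₁ ∧ … ∧ C_n` over variables `x₁,…,x_m`, given by its sets of literals `lits i`. -/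

/-- The alphabet symbols. -/
inductive VSym (n m : ℕ) : Type where
  | r : VSym n m
  | t : Fin m → VSym n m
  | f : Fin m → VSym n m
  | c : Fin n → VSym n m
deriving DecidableEq

/-- The rule `r → (t₁|f₁) || … || (t_m|f_m)`. -/
def rootRule (n m : ℕ) : DIME (VSym n m) :=
  ⟨(List.finRange m).map fun j =>
      ([([(VSym.t j, true)], Iv.one), ([(VSym.f j, true)], Iv.one)], Iv.one)⟩

/-- The rule `t_j → c_{j₁} || … || c_{j_k}` (for `s = true`; clauses using the literal
`x_j`), resp. `f_j → c_{j₁} || … || c_{j_k}` (for `s = false`; clauses using `¬x_j`). -/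
def litRule {n m : ℕ} (lits : Fin n → Finset (Fin m × Bool)) (j : Fin m) (s : Bool) :
    DIME (VSym n m) :=
  ⟨((List.finRange n).filter (fun i => (j, s) ∈ lits i)).map fun i =>
      ([([(VSym.c i, true)], Iv.one)], Iv.one)⟩

/-- The DIMS `S` with root label `r` and the rules above (and `c_i → ε`). -/
def schema12 {n m : ℕ} (lits : Fin n → Finset (Fin m × Bool)) : Schema (VSym n m) where
  root := VSym.r
  rules := fun a =>
    match a with
    | .r => rootRule n m
    | .t j => litRule lits j true
    | .f j => litRule lits j false
    | .c _ => ⟨[]⟩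

/-- The twig query `q = r[//c₁]…[//c_n]`: its root (the node `none`) is labeled `r` and
has `n` children via descendant edges (the nodes `some i`), labeled `c_i` respectively. -/
def query12 (n m : ℕ) : Twig (VSym n m) (Option (Fin n)) where
  nodes := Finset.univ
  root := none
  root_mem := Finset.mem_univ _
  lab := fun x =>
    match x with
    | none => some VSym.r
    | some i => some (VSym.c i)
  child := fun _ _ => False
  desc := fun x y => x = none ∧ y ≠ none
  child_mem := by intro _ _ h; exact h.elim
  desc_mem := by intro _ _ _; exact ⟨Finset.mem_univ _, Finset.mem_univ _⟩
  edges_disjoint := by intro _ _ h; exact h.1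
  parent_unique := by
    intro x _ hx
    refine ⟨none, Or.inr ⟨rfl, hx⟩, ?_⟩
    rintro y (h | h)
    · exact h.elim
    · exact h.1
  acyclic := by
    intro x h
    have h1 : x = none := by
      obtain ⟨b, hab, -⟩ := Relation.TransGen.head'_iff.mp h
      rcases hab with h' | h'
      · exact h'.elim
      · exact h'.1
    have h2 : x ≠ none := by
      obtain ⟨c, -, hca⟩ := Relation.TransGen.tail'_iff.mp h
      rcases hca with h' | h'
      · exact h'.elim
      · exact h'.2
    exact h2 h1

set_option linter.unusedSectionVars false
section Aux
variable {σ : Type u} [DecidableEq σ]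

lemma UWord.add_zero (w : UWord σ) : w.add UWord.zero = w :=
  funext fun _ => Nat.add_zero _

lemma listSum_cons (w : UWord σ) (l : List (UWord σ)) :
    listSum (w :: l) = w.add (listSum l) := rfl

lemma iterLang_one (L : Set (UWord σ)) : iterLang L Iv.one = L := by
  ext w
  constructor
  · rintro (⟨l, hl, hlo, hhi, rfl⟩ | ⟨h, -⟩)
    · simp only [Iv.one] at hhi hlo
      have hle : l.length ≤ 1 := by exact_mod_cast hhi
      have h1 : l.length = 1 := le_antisymm hle hlo
      obtain ⟨u, rfl⟩ := List.length_eq_one_iff.mp h1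
      simpa [listSum, UWord.add_zero] using hl u (by simp)
    · simp [Iv.one] at h
  · intro hw
    exact Or.inl ⟨[w], by simpa using hw, by simp [Iv.one], by simp [Iv.one],
      by simp [listSum, UWord.add_zero]⟩

lemma Atom.lang_single (x : σ) : Atom.lang [(x, true)] = {UWord.single x} := by
  ext w
  simp [Atom.lang, listConcLang, atomEntryLang, UWord.add_zero]

lemma Clause.lang_single (x : σ) :
    Clause.lang [([(x, true)], Iv.one)] = {UWord.single x} := by
  ext w
  simp [Clause.lang, iterLang_one, Atom.lang_single]

lemma Clause.lang_pair (x y : σ) :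
    Clause.lang [([(x, true)], Iv.one), ([(y, true)], Iv.one)]
      = {UWord.single x, UWord.single y} := by
  ext w
  simp [Clause.lang, iterLang_one, Atom.lang_single]

lemma mandList_lang (l : List σ) :
    DIME.lang (⟨l.map fun x => ([([(x, true)], Iv.one)], Iv.one)⟩ : DIME σ)
      = {listSum (l.map UWord.single)} := by
  induction l with
  | nil => simp [DIME.lang, listConcLang, listSum]
  | cons x l ih =>
    ext w
    simp only [DIME.lang, List.map_cons, listConcLang, iterLang_one, Clause.lang_single,
      Set.mem_singleton_iff, Set.mem_setOf_eq] at ih ⊢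
    constructor
    · rintro ⟨w₁, hw₁, w₂, hw₂, rfl⟩
      have h2 := (Set.ext_iff.mp ih w₂).mp hw₂
      rw [Set.mem_singleton_iff] at h2
      rw [hw₁, h2]
      rfl
    · intro hw
      exact ⟨UWord.single x, rfl, listSum (l.map UWord.single),
        (Set.ext_iff.mp ih _).mpr rfl, hw⟩

lemma listSum_single_ne {l : List σ} {a : σ}
    (h : listSum (l.map UWord.single) a ≠ 0) : a ∈ l := by
  induction l with
  | nil => simp [listSum, UWord.zero] at h
  | cons x l ih =>
    by_cases hax : a = x
    · simp [hax]
    · right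
      apply ih
      simpa [listSum, UWord.add, UWord.single, hax] using h

lemma childWord_ne_zero {ν : Type v} (t : UTree σ ν) {p x : ν} (h : t.child p x) :
    t.childWord p (t.lab x) ≠ 0 := by
  have hfin : {y | t.child p y ∧ t.lab y = t.lab x}.Finite :=
    (t.nodes : Set ν).toFinite.subset (fun y hy => (t.child_mem hy.1).2)
  exact ((Set.ncard_pos hfin).mpr ⟨x, h, rfl⟩).ne'

end Aux
set_option linter.unusedSectionVars false
section Aux2
variable {n m : ℕ}

lemma litRule_lang (lits : Fin n → Finset (Fin m × Bool)) (j : Fin m) (s : Bool) :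
    DIME.lang (litRule lits j s)
      = {listSum ((((List.finRange n).filter fun i => (j, s) ∈ lits i).map
          VSym.c).map UWord.single)} := by
  have h := mandList_lang (σ := VSym n m)
    (((List.finRange n).filter fun i => (j, s) ∈ lits i).map VSym.c)
  rw [List.map_map] at h
  exact h

lemma rootAux (l : List (Fin m)) (hl : l.Nodup) (w : UWord (VSym n m)) :
    w ∈ listConcLang (fun p => iterLang (Clause.lang p.1) p.2)
        (l.map fun j =>
          ([([(VSym.t j, true)], Iv.one), ([(VSym.f j, true)], Iv.one)], Iv.one)) ↔
      ∃ g : Fin m → Bool,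
        w = listSum (l.map fun j =>
          UWord.single (if g j then VSym.t j else VSym.f j)) := by
  induction l generalizing w with
  | nil =>
    simp only [List.map_nil, listConcLang, Set.mem_singleton_iff]
    exact ⟨fun h => ⟨fun _ => true, by simpa [listSum] using h⟩,
      fun ⟨g, hg⟩ => by simpa [listSum] using hg⟩
  | cons j l ih =>
    obtain ⟨hj, hnd⟩ := List.nodup_cons.mp hl
    simp only [List.map_cons, listConcLang, Set.mem_setOf_eq, iterLang_one,
      Clause.lang_pair, Set.mem_insert_iff, Set.mem_singleton_iff]
    constructor
    · rintro ⟨w₁, hw₁, w₂, hw₂, rfl⟩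
      obtain ⟨g, rfl⟩ := (ih hnd w₂).mp hw₂
      have hmap : ∀ b : Bool,
          (l.map fun j' => (UWord.single
            (if Function.update g j b j' then VSym.t j' else VSym.f j') : UWord (VSym n m)))
          = l.map fun j' => UWord.single (if g j' then VSym.t j' else VSym.f j') :=
        fun b => List.map_congr_left fun j' hj' => by
          have hne : j' ≠ j := fun h => hj (h ▸ hj')
          rw [Function.update_of_ne hne]
      rcases hw₁ with rfl | rfl
      · exact ⟨Function.update g j true, by rw [listSum_cons, hmap, Function.update_self]; rfl⟩
      · exact ⟨Function.update g j false, by rw [listSum_cons, hmap, Function.update_self]; rfl⟩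
    · rintro ⟨g, rfl⟩
      refine ⟨UWord.single (if g j then VSym.t j else VSym.f j), ?_,
        listSum (l.map fun j' => UWord.single (if g j' then VSym.t j' else VSym.f j')),
        (ih hnd _).mpr ⟨g, rfl⟩, rfl⟩
      cases g j <;> simp

lemma rootRule_lang (w : UWord (VSym n m)) :
    w ∈ DIME.lang (rootRule n m) ↔
      ∃ g : Fin m → Bool,
        w = listSum ((List.finRange m).map fun j =>
          UWord.single (if g j then VSym.t j else VSym.f j)) :=
  rootAux (List.finRange m) (List.nodup_finRange m) w

end Aux2
section Forward
variable {n m : ℕ}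

/-- Node type for the witness tree. -/
abbrev FNode (n m : ℕ) : Type := Option (Fin m ⊕ Fin m × Fin n)

variable (lits : Fin n → Finset (Fin m × Bool)) (v : Fin m → Bool)

def fLab : FNode n m → VSym n m
  | none => VSym.r
  | some (Sum.inl j) => if v j then VSym.t j else VSym.f j
  | some (Sum.inr (_, i)) => VSym.c i

def fChild (x y : FNode n m) : Prop :=
  (x = none ∧ ∃ j : Fin m, y = some (Sum.inl j)) ∨
  (∃ (j : Fin m) (i : Fin n),
    x = some (Sum.inl j) ∧ y = some (Sum.inr (j, i)) ∧ (j, v j) ∈ lits i)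

def fOk : FNode n m → Prop
  | some (Sum.inr (j, i)) => (j, v j) ∈ lits i
  | _ => True

instance : DecidablePred (fOk lits v) := by
  intro x
  rcases x with _ | (j | ⟨j, i⟩) <;> unfold fOk <;> infer_instance

def fRank : FNode n m → ℕ
  | none => 0
  | some (Sum.inl _) => 1
  | some (Sum.inr _) => 2

lemma fChild_rank {x y : FNode n m} (h : fChild lits v x y) :
    fRank x < fRank y := by
  rcases h with ⟨rfl, j, rfl⟩ | ⟨j, i, rfl, rfl, -⟩ <;> simp [fRank]

def fTree : UTree (VSym n m) (FNode n m) where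
  nodes := Finset.univ.filter (fOk lits v)
  root := none
  root_mem := by simp [fOk]
  lab := fLab v
  child := fChild lits v
  child_mem := by
    intro x y h
    rcases h with ⟨rfl, j, rfl⟩ | ⟨j, i, rfl, rfl, hmem⟩ <;>
      simp [fOk, *]
  parent_unique := by
    intro y hy hne
    rcases y with _ | (j | ⟨j, i⟩)
    · exact absurd rfl hne
    · refine ⟨none, Or.inl ⟨rfl, j, rfl⟩, ?_⟩
      rintro x (⟨rfl, -⟩ | ⟨j', i', rfl, hji, -⟩)
      · rfl
      · exact absurd hji (by simp)
    · have hmem : (j, v j) ∈ lits i := by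
        simpa [fOk] using hy
      refine ⟨some (Sum.inl j), Or.inr ⟨j, i, rfl, rfl, hmem⟩, ?_⟩
      rintro x (⟨rfl, j', hji⟩ | ⟨j', i', rfl, hji, -⟩)
      · exact absurd hji (by simp)
      · simp only [Option.some.injEq, Sum.inr.injEq, Prod.mk.injEq] at hji
        obtain ⟨rfl, rfl⟩ := hji
        rfl
  acyclic := by
    intro x h
    have : ∀ a b : FNode n m, Relation.TransGen (fChild lits v) a b → fRank a < fRank b := by
      intro a b hab
      induction hab with
      | single h => exact fChild_rank lits v h
      | tail _ h ih => exact ih.trans (fChild_rank lits v h)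
    exact lt_irrefl _ (this x x h)

end Forward
section Forward2
variable {n m : ℕ} (lits : Fin n → Finset (Fin m × Bool)) (v : Fin m → Bool)

lemma listSum_map_apply {σ : Type u} {α : Type v} (l : List α) (F : α → UWord σ) (a : σ) :
    listSum (l.map F) a = (l.map fun x => F x a).sum := by
  induction l with
  | nil => rfl
  | cons x l ih =>
    show F x a + listSum (l.map F) a = ((F x a :: l.map fun y => F y a)).sum
    rw [List.sum_cons, ih]

lemma filter_map_sum {α : Type v} (l : List α) (p : α → Bool) (F : α → ℕ) :
    ((l.filter p).map F).sum = (l.map fun x => if p x then F x else 0).sum := by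
  induction l with
  | nil => rfl
  | cons x l ih =>
    by_cases hx : p x <;> simp [List.filter_cons, hx, ih]

lemma fchildWord_none :
    (fTree lits v).childWord none
      = listSum ((List.finRange m).map fun j =>
          UWord.single (if v j then VSym.t j else VSym.f j)) := by
  funext a
  have h1 : (fTree lits v).childWord none a
      = {j : Fin m | a = if v j then VSym.t j else VSym.f j}.ncard := by
    show {y | fChild lits v none y ∧ fLab v y = a}.ncard = _
    have hset : {y | fChild lits v none y ∧ fLab v y = a}
        = (fun j : Fin m => (some (Sum.inl j) : FNode n m)) ''
            {j | a = if v j then VSym.t j else VSym.f j} := by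
      ext y
      constructor
      · rintro ⟨⟨-, j, rfl⟩ | ⟨j, i, h, -⟩, hlab⟩
        · exact ⟨j, hlab.symm, rfl⟩
        · exact absurd h (by simp)
      · rintro ⟨j, hj, rfl⟩
        exact ⟨Or.inl ⟨rfl, j, rfl⟩, hj.symm⟩
    rw [hset, Set.ncard_image_of_injective _ (fun x y h => by simpa using h)]
  rw [h1, listSum_map_apply, ← Fin.sum_univ_def]
  simp only [UWord.single]
  rw [Finset.sum_boole, Set.ncard_eq_toFinset_card', Set.toFinset_setOf]
  simp
lemma fchildWord_inl (j : Fin m) :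
    (fTree lits v).childWord (some (Sum.inl j))
      = listSum ((((List.finRange n).filter fun i => (j, v j) ∈ lits i).map
          VSym.c).map UWord.single) := by
  funext a
  have h1 : (fTree lits v).childWord (some (Sum.inl j)) a
      = {i : Fin n | (j, v j) ∈ lits i ∧ a = VSym.c i}.ncard := by
    show {y | fChild lits v (some (Sum.inl j)) y ∧ fLab v y = a}.ncard = _
    have hset : {y | fChild lits v (some (Sum.inl j)) y ∧ fLab v y = a}
        = (fun i : Fin n => (some (Sum.inr (j, i)) : FNode n m)) ''
            {i | (j, v j) ∈ lits i ∧ a = VSym.c i} := by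
      ext y
      constructor
      · rintro ⟨⟨h, -⟩ | ⟨j', i, hj', rfl, hmem⟩, hlab⟩
        · exact absurd h (by simp)
        · obtain rfl : j' = j := by simpa using hj'.symm
          exact ⟨i, ⟨hmem, hlab.symm⟩, rfl⟩
      · rintro ⟨i, ⟨hi, ha⟩, rfl⟩
        exact ⟨Or.inr ⟨j, i, rfl, rfl, hi⟩, ha.symm⟩
    rw [hset, Set.ncard_image_of_injective _ (fun x y h => by simpa using h)]
  rw [h1, listSum_map_apply, List.map_map, filter_map_sum, ← Fin.sum_univ_def]
  simp only [Function.comp]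
  have hterm : ∀ i : Fin n,
      (if decide ((j, v j) ∈ lits i) then UWord.single (VSym.c i) a else 0)
      = if ((j, v j) ∈ lits i ∧ a = VSym.c i) then 1 else 0 := by
    intro i
    by_cases h1 : (j, v j) ∈ lits i <;> by_cases h2 : a = VSym.c i <;>
      simp [h1, h2, UWord.single]
  rw [Finset.sum_congr rfl (fun i _ => hterm i), Finset.sum_boole,
    Set.ncard_eq_toFinset_card', Set.toFinset_setOf]
  simp

lemma fchildWord_inr (x : Fin m × Fin n) :
    (fTree lits v).childWord (some (Sum.inr x)) = UWord.zero := by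
  funext a
  show {y | fChild lits v (some (Sum.inr x)) y ∧ fLab v y = a}.ncard = 0
  have hset : {y | fChild lits v (some (Sum.inr x)) y ∧ fLab v y = a} = ∅ := by
    ext y
    simp only [Set.mem_setOf_eq, Set.mem_empty_iff_false, iff_false]
    rintro ⟨⟨h, -⟩ | ⟨j', i, h, -⟩, -⟩ <;> simp at h
  rw [hset, Set.ncard_empty]

end Forward2
section Main
variable {n m : ℕ}

lemma fTree_mem (lits : Fin n → Finset (Fin m × Bool)) (v : Fin m → Bool) :
    (schema12 lits).Mem (fTree lits v) := by
  constructor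
  · rfl
  · intro x hx
    rcases x with _ | (j | ⟨j, i⟩)
    · show (fTree lits v).childWord none ∈ DIME.lang (rootRule n m)
      exact (rootRule_lang _).mpr ⟨v, fchildWord_none lits v⟩
    · have hR : (schema12 lits).rules ((fTree lits v).lab (some (Sum.inl j)))
          = litRule lits j (v j) := by
        show (schema12 lits).rules (if v j then VSym.t j else VSym.f j) = _
        cases v j <;> rfl
      rw [hR, litRule_lang]
      exact fchildWord_inl lits v j
    · show (fTree lits v).childWord (some (Sum.inr (j, i)))
        ∈ DIME.lang (⟨[]⟩ : DIME (VSym n m))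
      show _ ∈ ({UWord.zero} : Set (UWord (VSym n m)))
      rw [Set.mem_singleton_iff]
      exact fchildWord_inr lits v (j, i)

lemma fTree_sat (lits : Fin n → Finset (Fin m × Bool)) (v : Fin m → Bool)
    (hsat : ∀ i : Fin n, ∃ ℓ ∈ lits i, v ℓ.1 = ℓ.2) :
    (query12 n m).Sat (fTree lits v) := by
  have hch : ∀ i : Fin n, ∃ j : Fin m, (j, v j) ∈ lits i := by
    intro i
    obtain ⟨ℓ, hℓ, hv⟩ := hsat i
    exact ⟨ℓ.1, by rwa [hv, Prod.mk.eta]⟩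
  choose jf hjf using hch
  refine ⟨fun x => match x with
    | none => none
    | some i => some (Sum.inr (jf i, i)), rfl, ?_, ?_, ?_, ?_⟩
  · intro x hx
    rcases x with _ | i
    · simp [fTree, fOk]
    · simp [fTree, fOk, hjf i]
  · intro x y h
    exact h.elim
  · rintro x y hxy
    obtain ⟨rfl, hy⟩ : x = none ∧ y ≠ none := hxy
    rcases y with _ | i
    · exact absurd rfl hy
    · exact Relation.TransGen.head (Or.inl ⟨rfl, jf i, rfl⟩)
        (Relation.TransGen.single (Or.inr ⟨jf i, i, rfl, rfl, hjf i⟩))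
  · intro x hx
    rcases x with _ | i <;> exact Or.inr rfl

theorem statement12' (lits : Fin n → Finset (Fin m × Bool)) :
    (∃ v : Fin m → Bool, ∀ i : Fin n, ∃ ℓ ∈ lits i, v ℓ.1 = ℓ.2) ↔
      ∃ (ν : Type) (t : UTree (VSym n m) ν),
        (schema12 lits).Mem t ∧ (query12 n m).Sat t := by
  constructor
  · rintro ⟨v, hsat⟩
    exact ⟨FNode n m, fTree lits v, fTree_mem lits v, fTree_sat lits v hsat⟩
  · rintro ⟨ν, t, ⟨hroot, hrule⟩, f, hfroot, hfnodes, hfchild, hdesc, hlab⟩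
    have hrootW := hrule t.root t.root_mem
    have hRr : (schema12 lits).rules (t.lab t.root) = rootRule n m := by
      rw [hroot]; rfl
    rw [hRr] at hrootW
    obtain ⟨g, hW⟩ := (rootRule_lang _).mp hrootW
    refine ⟨g, fun i => ?_⟩
    have hni : Relation.TransGen t.child t.root (f (some i)) := by
      have h := hdesc none (some i) ⟨rfl, by simp⟩
      have hfr : f none = t.root := hfroot
      rwa [hfr] at h
    have hlabni : t.lab (f (some i)) = VSym.c i := by
      rcases hlab (some i) (Finset.mem_univ _) with h | h
      · exact absurd h (by simp [query12])
      · have : some (VSym.c i) = some (t.lab (f (some i))) := h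
        exact (Option.some.inj this).symm
    obtain ⟨x1, h01, hrest⟩ := Relation.TransGen.head'_iff.mp hni
    have hne1 := childWord_ne_zero t h01
    rw [hW] at hne1
    rw [show ((List.finRange m).map fun j =>
          UWord.single (if g j then VSym.t j else VSym.f j))
        = ((List.finRange m).map fun j =>
            (if g j then VSym.t j else VSym.f j)).map UWord.single from
        by rw [List.map_map]; rfl] at hne1
    obtain ⟨j, -, hgj⟩ := List.mem_map.mp (listSum_single_ne hne1)
    rcases hrest.cases_head with rfl | ⟨x2, h12, hrest2⟩
    · rw [hlabni] at hgj
      exact absurd hgj (by cases hg : g j <;> simp [hg])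
    · have hx1rule := hrule x1 (t.child_mem h01).2
      have hRx1 : (schema12 lits).rules (t.lab x1) = litRule lits j (g j) := by
        rw [← hgj]
        cases g j <;> rfl
      rw [hRx1, litRule_lang, Set.mem_singleton_iff] at hx1rule
      have hne2 := childWord_ne_zero t h12
      rw [hx1rule] at hne2
      obtain ⟨i', hi', hci'⟩ := List.mem_map.mp (listSum_single_ne hne2)
      have hPi' : (j, g j) ∈ lits i' := by
        have := (List.mem_filter.mp hi').2
        exact of_decide_eq_true this
      rcases hrest2.cases_head with rfl | ⟨x3, h23, -⟩
      · obtain rfl : i' = i := by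
          have : VSym.c i' = VSym.c i := hci'.trans hlabni
          simpa using this
        exact ⟨(j, g j), hPi', rfl⟩
      · exfalso
        have hx2rule := hrule x2 (t.child_mem h12).2
        have hR2 : (schema12 lits).rules (t.lab x2) = (⟨[]⟩ : DIME (VSym n m)) := by
          rw [← hci']; rfl
        rw [hR2] at hx2rule
        have hzero : t.childWord x2 = UWord.zero := hx2rule
        exact childWord_ne_zero t h23 (by rw [hzero]; rfl)

end Main

/-- `φ` is satisfiable if and only if there exists a tree `t` with
`t ∈ L(S)` and `t ⊨ q`. -/
theorem statement12 (n m : ℕ) (lits : Fin n → Finset (Fin m × Bool)) :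
    (∃ v : Fin m → Bool, ∀ i : Fin n, ∃ ℓ ∈ lits i, v ℓ.1 = ℓ.2) ↔
      ∃ (ν : Type) (t : UTree (VSym n m) ν),
        (schema12 lits).Mem t ∧ (query12 n m).Sat t := by
  exact statement12' lits
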